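/- Strong bisimilarity is a congruence for the node encapsulation and network parallel operators: if M₁ ~ M₂ and N₁ ~ N₂ then M₁ ∥ N₁ ~ M₂ ∥ N₂ and [M₁] ~ [M₂]. -/
import Mathlib


/-- A labelled transition system. -/
structure LTS (S L : Type) where
  tr : S → L → S → Prop

/-- `R` is a strong bisimulation on the LTS. -/
def IsBisim {S L : Type} (lts : LTS S L) (R : S → S → Prop) : Prop :=
  ∀ p q, R p q →
    (∀ a p', lts.tr p a p' → ∃ q', lts.tr q a q' ∧ R p' q') ∧
    (∀ a q', lts.tr q a q' → ∃ p', lts.tr p a p' ∧ R p' q')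

/-- Two states are strongly bisimilar if some strong bisimulation relates them. -/
def Bisimilar {S L : Type} (lts : LTS S L) (p q : S) : Prop :=
  ∃ R, IsBisim lts R ∧ R p q

/-- Labels for network expressions. -/
inductive NLab (IP MSG DATA : Type) : Type
  | cast (R : Set IP) (m : MSG)
  | arrive (H K : Set IP) (m : MSG)
  | deliver (ip : IP) (d : DATA)
  | tau
  | connect (ip ip' : IP)
  | disconnect (ip ip' : IP)
  | newpkt (ip : IP) (d : DATA) (dip : IP)

/-- Network expressions: nodes, parallel compositions M ∥ N, and encapsulations [M]. -/
inductive Net (σ : Type) : Type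
  | node (s : σ)
  | par (M N : Net σ)
  | enc (M : Net σ)

/-- Labels that simply interleave in a parallel composition. -/
def Interleavable {IP MSG DATA : Type} : NLab IP MSG DATA → Prop
  | .deliver _ _ => True
  | .tau => True
  | .connect _ _ => True
  | .disconnect _ _ => True
  | _ => False

/-- Operational semantics of ∥ and of the encapsulation operator [·]:
a cast of one side synchronizes with an arrive of the other (side conditions
H ⊆ R, K ∩ R = ∅, yielding the cast); arrives synchronize with arrives (union);
other actions interleave. The encapsulation turns cast actions into τ, blocks
arrive actions except {ip}¬K:arrive(newpkt(d,dip)), which becomes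
ip:newpkt(d,dip), and passes through deliver, τ, connect and disconnect. -/
inductive NStep {σ IP MSG DATA : Type} (newpktMsg : DATA → IP → MSG)
    (base : σ → NLab IP MSG DATA → σ → Prop) :
    Net σ → NLab IP MSG DATA → Net σ → Prop
  | node {s a s'} : base s a s' → NStep newpktMsg base (.node s) a (.node s')
  | castL {M M' N N' R H K m} : NStep newpktMsg base M (.cast R m) M' →
      NStep newpktMsg base N (.arrive H K m) N' → H ⊆ R → K ∩ R = ∅ →
      NStep newpktMsg base (.par M N) (.cast R m) (.par M' N')
  | castR {M M' N N' R H K m} : NStep newpktMsg base N (.cast R m) N' →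
      NStep newpktMsg base M (.arrive H K m) M' → H ⊆ R → K ∩ R = ∅ →
      NStep newpktMsg base (.par M N) (.cast R m) (.par M' N')
  | arrive {M M' N N' H K H' K' m} : NStep newpktMsg base M (.arrive H K m) M' →
      NStep newpktMsg base N (.arrive H' K' m) N' →
      NStep newpktMsg base (.par M N) (.arrive (H ∪ H') (K ∪ K') m) (.par M' N')
  | interL {M M' N a} : NStep newpktMsg base M a M' → Interleavable a →
      NStep newpktMsg base (.par M N) a (.par M' N)
  | interR {M N N' a} : NStep newpktMsg base N a N' → Interleavable a →
      NStep newpktMsg base (.par M N) a (.par M N')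
  | encCast {M M' R m} : NStep newpktMsg base M (.cast R m) M' →
      NStep newpktMsg base (.enc M) .tau (.enc M')
  | encNewpkt {M M' ip K d dip} :
      NStep newpktMsg base M (.arrive {ip} K (newpktMsg d dip)) M' →
      NStep newpktMsg base (.enc M) (.newpkt ip d dip) (.enc M')
  | encPass {M M' a} : NStep newpktMsg base M a M' → Interleavable a →
      NStep newpktMsg base (.enc M) a (.enc M')

/-- The LTS of network expressions. -/
def netLTS {σ IP MSG DATA : Type} (newpktMsg : DATA → IP → MSG)
    (base : σ → NLab IP MSG DATA → σ → Prop) :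
    LTS (Net σ) (NLab IP MSG DATA) := ⟨NStep newpktMsg base⟩

/-- Strong bisimilarity is a congruence for the network parallel composition ∥
and for the encapsulation operator [·]. -/
theorem net_congruence {σ IP MSG DATA : Type} (newpktMsg : DATA → IP → MSG)
    (base : σ → NLab IP MSG DATA → σ → Prop) (M₁ M₂ N₁ N₂ : Net σ)
    (hM : Bisimilar (netLTS newpktMsg base) M₁ M₂)
    (hN : Bisimilar (netLTS newpktMsg base) N₁ N₂) :
    Bisimilar (netLTS newpktMsg base) (M₁.par N₁) (M₂.par N₂) ∧
    Bisimilar (netLTS newpktMsg base) (M₁.enc) (M₂.enc) := by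
  obtain ⟨RM, hRM, hM12⟩ := hM
  obtain ⟨RN, hRN, hN12⟩ := hN
  constructor
  · refine ⟨fun X Y => ∃ A B C D, X = .par A B ∧ Y = .par C D ∧ RM A C ∧ RN B D,
      ?_, M₁, N₁, M₂, N₂, rfl, rfl, hM12, hN12⟩
    rintro X Y ⟨A, B, C, D, rfl, rfl, hAC, hBD⟩
    constructor
    · rintro a p' hstep
      cases hstep with
      | castL h1 h2 hH hK =>
        obtain ⟨C', hC', hAC'⟩ := (hRM _ _ hAC).1 _ _ h1
        obtain ⟨D', hD', hBD'⟩ := (hRN _ _ hBD).1 _ _ h2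
        exact ⟨_, .castL hC' hD' hH hK, _, _, _, _, rfl, rfl, hAC', hBD'⟩
      | castR h1 h2 hH hK =>
        obtain ⟨D', hD', hBD'⟩ := (hRN _ _ hBD).1 _ _ h1
        obtain ⟨C', hC', hAC'⟩ := (hRM _ _ hAC).1 _ _ h2
        exact ⟨_, .castR hD' hC' hH hK, _, _, _, _, rfl, rfl, hAC', hBD'⟩
      | arrive h1 h2 =>
        obtain ⟨C', hC', hAC'⟩ := (hRM _ _ hAC).1 _ _ h1
        obtain ⟨D', hD', hBD'⟩ := (hRN _ _ hBD).1 _ _ h2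
        exact ⟨_, .arrive hC' hD', _, _, _, _, rfl, rfl, hAC', hBD'⟩
      | interL h hi =>
        obtain ⟨C', hC', hAC'⟩ := (hRM _ _ hAC).1 _ _ h
        exact ⟨_, .interL hC' hi, _, _, _, _, rfl, rfl, hAC', hBD⟩
      | interR h hi =>
        obtain ⟨D', hD', hBD'⟩ := (hRN _ _ hBD).1 _ _ h
        exact ⟨_, .interR hD' hi, _, _, _, _, rfl, rfl, hAC, hBD'⟩
    · rintro a q' hstep
      cases hstep with
      | castL h1 h2 hH hK =>
        obtain ⟨A', hA', hAC'⟩ := (hRM _ _ hAC).2 _ _ h1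
        obtain ⟨B', hB', hBD'⟩ := (hRN _ _ hBD).2 _ _ h2
        exact ⟨_, .castL hA' hB' hH hK, _, _, _, _, rfl, rfl, hAC', hBD'⟩
      | castR h1 h2 hH hK =>
        obtain ⟨B', hB', hBD'⟩ := (hRN _ _ hBD).2 _ _ h1
        obtain ⟨A', hA', hAC'⟩ := (hRM _ _ hAC).2 _ _ h2
        exact ⟨_, .castR hB' hA' hH hK, _, _, _, _, rfl, rfl, hAC', hBD'⟩
      | arrive h1 h2 =>
        obtain ⟨A', hA', hAC'⟩ := (hRM _ _ hAC).2 _ _ h1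
        obtain ⟨B', hB', hBD'⟩ := (hRN _ _ hBD).2 _ _ h2
        exact ⟨_, .arrive hA' hB', _, _, _, _, rfl, rfl, hAC', hBD'⟩
      | interL h hi =>
        obtain ⟨A', hA', hAC'⟩ := (hRM _ _ hAC).2 _ _ h
        exact ⟨_, .interL hA' hi, _, _, _, _, rfl, rfl, hAC', hBD⟩
      | interR h hi =>
        obtain ⟨B', hB', hBD'⟩ := (hRN _ _ hBD).2 _ _ h
        exact ⟨_, .interR hB' hi, _, _, _, _, rfl, rfl, hAC, hBD'⟩
  · refine ⟨fun X Y => ∃ A C, X = .enc A ∧ Y = .enc C ∧ RM A C,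
      ?_, M₁, M₂, rfl, rfl, hM12⟩
    rintro X Y ⟨A, C, rfl, rfl, hAC⟩
    constructor
    · rintro a p' hstep
      cases hstep with
      | encCast h =>
        obtain ⟨C', hC', hAC'⟩ := (hRM _ _ hAC).1 _ _ h
        exact ⟨_, .encCast hC', _, _, rfl, rfl, hAC'⟩
      | encNewpkt h =>
        obtain ⟨C', hC', hAC'⟩ := (hRM _ _ hAC).1 _ _ h
        exact ⟨_, .encNewpkt hC', _, _, rfl, rfl, hAC'⟩
      | encPass h hi =>
        obtain ⟨C', hC', hAC'⟩ := (hRM _ _ hAC).1 _ _ h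
        exact ⟨_, .encPass hC' hi, _, _, rfl, rfl, hAC'⟩
    · rintro a q' hstep
      cases hstep with
      | encCast h =>
        obtain ⟨A', hA', hAC'⟩ := (hRM _ _ hAC).2 _ _ h
        exact ⟨_, .encCast hA', _, _, rfl, rfl, hAC'⟩
      | encNewpkt h =>
        obtain ⟨A', hA', hAC'⟩ := (hRM _ _ hAC).2 _ _ h
        exact ⟨_, .encNewpkt hA', _, _, rfl, rfl, hAC'⟩
      | encPass h hi =>
        obtain ⟨A', hA', hAC'⟩ := (hRM _ _ hAC).2 _ _ h
        exact ⟨_, .encPass hA' hi, _, _, rfl, rfl, hAC'⟩
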